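/- For each γ ∈ (0, 11/12] and each δ ∈ ℝ, the function x ↦ ((2-x)² - 4√(1-x)√(1-γx))/x + δ√x(√(1-x) - √(1-γx)) + δ²(1 - √(1-x)√(1-γx)) is strictly increasing on (0,1). -/

import Mathlib

/-!
With `u = √(1 - x)` and `v = √(1 - γ x)`, the derivative is a quadratic `c + b δ + a δ²` in the
impedance parameter with `a = (1 + γ - 2γx) / (2uv) > 0`, so it suffices that its discriminant is
negative. Clearing denominators (`x = 1 - u²`, `γx = 1 - v²`) turns this into a polynomial
inequality in `u, v`, in which `γ ≤ 11/12` enters as `1 + 11u² ≤ 12v²`.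
-/

open Real Set

section Derivative

variable {γ x : ℝ}

lemma hasDerivAt_sqrt_one_sub_mul (h : 0 < 1 - γ * x) :
    HasDerivAt (fun y => √(1 - γ * y)) (-γ / (2 * √(1 - γ * x))) x := by
  simpa [neg_div] using (((hasDerivAt_id x).const_mul γ).const_sub 1).sqrt h.ne'

lemma hasDerivAt_sqrt_one_sub (h : x < 1) :
    HasDerivAt (fun y => √(1 - y)) (-1 / (2 * √(1 - x))) x := by
  simpa using hasDerivAt_sqrt_one_sub_mul (γ := 1) (x := x) (by linarith)

lemma hasDerivAt_one_sub_sqrt_mul_sqrt (hx : x < 1) (hγx : 0 < 1 - γ * x) :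
    HasDerivAt (fun y => 1 - √(1 - y) * √(1 - γ * y))
      ((γ * (1 - x) + (1 - γ * x)) / (2 * (√(1 - x) * √(1 - γ * x)))) x := by
  have hu := sqrt_pos.2 (sub_pos.2 hx)
  have hv := sqrt_pos.2 hγx
  refine HasDerivAt.congr_deriv
    (((hasDerivAt_sqrt_one_sub hx).mul (hasDerivAt_sqrt_one_sub_mul hγx)).const_sub 1) ?_
  have hu2 := sq_sqrt (sub_pos.2 hx).le
  have hv2 := sq_sqrt hγx.le
  set u := √(1 - x)
  set v := √(1 - γ * x)
  field_simp
  linear_combination γ * hu2 + hv2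

lemma hasDerivAt_sqrt_mul_sub (hx0 : 0 < x) (hx1 : x < 1) (hγx : 0 < 1 - γ * x) :
    HasDerivAt (fun y => √y * (√(1 - y) - √(1 - γ * y)))
      ((√(1 - x) - √(1 - γ * x)) * (1 + 2 * (√(1 - x) * √(1 - γ * x)))
        / (2 * (√x * (√(1 - x) * √(1 - γ * x))))) x := by
  have hu := sqrt_pos.2 (sub_pos.2 hx1)
  have hv := sqrt_pos.2 hγx
  have hs := sqrt_pos.2 hx0
  refine ((hasDerivAt_sqrt hx0.ne').mul ((hasDerivAt_sqrt_one_sub hx1).sub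
    (hasDerivAt_sqrt_one_sub_mul hγx))).congr_deriv ?_
  have hu2 := sq_sqrt (sub_pos.2 hx1).le
  have hv2 := sq_sqrt hγx.le
  have hs2 := sq_sqrt hx0.le
  simp only [Pi.sub_apply]
  set u := √(1 - x)
  set v := √(1 - γ * x)
  set s := √x
  field_simp
  linear_combination (u * γ - v) * hs2 + u * hv2 - v * hu2

lemma hasDerivAt_quotient (hx0 : 0 < x) (hx1 : x < 1) (hγx : 0 < 1 - γ * x) :
    HasDerivAt (fun y => ((2 - y) ^ 2 - 4 * √(1 - y) * √(1 - γ * y)) / y)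
      (1 + 2 * (√(1 - x) - √(1 - γ * x)) ^ 2 / (x ^ 2 * (√(1 - x) * √(1 - γ * x)))) x := by
  have hu := sqrt_pos.2 (sub_pos.2 hx1)
  have hv := sqrt_pos.2 hγx
  refine (((((hasDerivAt_id x).const_sub 2).pow 2).sub
    (((hasDerivAt_sqrt_one_sub hx1).const_mul 4).mul (hasDerivAt_sqrt_one_sub_mul hγx))).div
    (hasDerivAt_id x) hx0.ne').congr_deriv ?_
  have hu2 := sq_sqrt (sub_pos.2 hx1).le
  have hv2 := sq_sqrt hγx.le
  simp only [Pi.sub_apply, Pi.mul_apply, Pi.pow_apply, id]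
  set u := √(1 - x)
  set v := √(1 - γ * x)
  field_simp
  linear_combination (4 * u ^ 2) * hv2 + (4 * v ^ 2) * hu2

lemma hasDerivAt_quadratic_in_δ (δ : ℝ) (hx0 : 0 < x) (hx1 : x < 1) (hγx : 0 < 1 - γ * x) :
    HasDerivAt
      (fun y => ((2 - y) ^ 2 - 4 * √(1 - y) * √(1 - γ * y)) / y
        + δ * √y * (√(1 - y) - √(1 - γ * y)) + δ ^ 2 * (1 - √(1 - y) * √(1 - γ * y)))
      (1 + 2 * (√(1 - x) - √(1 - γ * x)) ^ 2 / (x ^ 2 * (√(1 - x) * √(1 - γ * x)))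
        + δ * ((√(1 - x) - √(1 - γ * x)) * (1 + 2 * (√(1 - x) * √(1 - γ * x)))
          / (2 * (√x * (√(1 - x) * √(1 - γ * x)))))
        + δ ^ 2 * ((γ * (1 - x) + (1 - γ * x)) / (2 * (√(1 - x) * √(1 - γ * x))))) x := by
  refine (((hasDerivAt_quotient hx0 hx1 hγx).add
    ((hasDerivAt_sqrt_mul_sub hx0 hx1 hγx).const_mul δ)).add
    ((hasDerivAt_one_sub_sqrt_mul_sqrt hx1 hγx).const_mul (δ ^ 2))).congr_of_eventuallyEq
    (.of_forall fun y => ?_)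
  simp only [Pi.add_apply]
  ring

end Derivative

lemma quadratic_pos_of_discrim_neg {a b c : ℝ} (ha : 0 < a) (h : discrim a b c < 0) (x : ℝ) :
    0 < a * (x * x) + b * x + c := by
  have key : 4 * a * (a * (x * x) + b * x + c) = (2 * a * x + b) ^ 2 - discrim a b c := by
    unfold discrim; ring
  nlinarith [sq_nonneg (2 * a * x + b)]

lemma sq_mul_sq_le_of_sq_le_half {u : ℝ} (hu0 : 0 ≤ u) (hu : u ^ 2 ≤ 1 / 2) :
    (1 - u ^ 2) ^ 2 * (1 + 2 * u) ^ 2 ≤ 16 * (u ^ 2 + (1 + 11 * u ^ 2) * (1 - 2 * u ^ 2) / 12) := by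
  -- three times the difference of the two sides is `(1 - 6u)² + u² (42 + 24u - 67u² - 12u³ - 12u⁴)`
  have hr : 0 ≤ 42 + 24 * u - 67 * u ^ 2 - 12 * u ^ 3 - 12 * u ^ 4 := by
    nlinarith [mul_nonneg hu0 (sub_nonneg.2 hu), mul_nonneg (sq_nonneg u) (sub_nonneg.2 hu)]
  nlinarith [sq_nonneg (1 - 6 * u), mul_nonneg (sq_nonneg u) hr]

lemma sq_mul_sq_le {u v : ℝ} (hu0 : 0 ≤ u) (hv0 : 0 ≤ v) (hv1 : v ≤ 1)
    (huv : 1 + 11 * u ^ 2 ≤ 12 * v ^ 2) :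
    (1 - u ^ 2) ^ 2 * (1 + 2 * (u * v)) ^ 2 ≤ 16 * (u ^ 2 + v ^ 2 - 2 * u ^ 2 * v ^ 2) := by
  have huv_le : u * v ≤ u := mul_le_of_le_one_right hu0 hv1
  -- split on the sign of `1 - 2u²`, the coefficient of `v²` in `u² + v² - 2u²v²`
  rcases le_or_gt (u ^ 2) (1 / 2) with hu | hu
  · have hm : u ^ 2 + (1 + 11 * u ^ 2) * (1 - 2 * u ^ 2) / 12
        ≤ u ^ 2 + v ^ 2 - 2 * u ^ 2 * v ^ 2 := by
      nlinarith [mul_le_mul_of_nonneg_right huv (by linarith : (0:ℝ) ≤ 1 - 2 * u ^ 2)]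
    have hl : (1 - u ^ 2) ^ 2 * (1 + 2 * (u * v)) ^ 2 ≤ (1 - u ^ 2) ^ 2 * (1 + 2 * u) ^ 2 := by
      gcongr
    linarith [sq_mul_sq_le_of_sq_le_half hu0 hu]
  · have hm : 1 - u ^ 2 ≤ u ^ 2 + v ^ 2 - 2 * u ^ 2 * v ^ 2 := by
      nlinarith [mul_le_mul_of_nonneg_left (pow_le_one₀ hv0 hv1 : v ^ 2 ≤ 1)
        (by linarith : (0:ℝ) ≤ 2 * u ^ 2 - 1)]
    have hu1 : u ^ 2 ≤ 1 := by nlinarith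
    have hl : (1 + 2 * (u * v)) ^ 2 ≤ 9 := by nlinarith
    nlinarith [sq_nonneg (1 - u ^ 2)]

lemma discriminant_numerator_neg {u v : ℝ} (hu0 : 0 < u) (hu1 : u < 1) (hv0 : 0 < v) (hv1 : v ≤ 1)
    (huv : 1 + 11 * u ^ 2 ≤ 12 * v ^ 2) :
    (1 - u ^ 2) ^ 2 * (u - v) ^ 2 * (1 + 2 * (u * v)) ^ 2
      < 8 * (u ^ 2 + v ^ 2 - 2 * u ^ 2 * v ^ 2) * (u * v * (1 - u ^ 2) ^ 2 + 2 * (u - v) ^ 2) := by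
  have hx : 0 < 1 - u ^ 2 := by nlinarith
  have hm : 0 < u ^ 2 + v ^ 2 - 2 * u ^ 2 * v ^ 2 := by
    nlinarith [mul_pos (mul_pos hv0 hv0) hx,
      mul_nonneg (sq_nonneg u) (by nlinarith : (0:ℝ) ≤ 1 - v ^ 2)]
  calc (1 - u ^ 2) ^ 2 * (u - v) ^ 2 * (1 + 2 * (u * v)) ^ 2
      = (u - v) ^ 2 * ((1 - u ^ 2) ^ 2 * (1 + 2 * (u * v)) ^ 2) := by ring
    _ ≤ (u - v) ^ 2 * (16 * (u ^ 2 + v ^ 2 - 2 * u ^ 2 * v ^ 2)) :=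
      mul_le_mul_of_nonneg_left (sq_mul_sq_le hu0.le hv0.le hv1 huv) (sq_nonneg _)
    _ < _ := by nlinarith [mul_pos (mul_pos hm (mul_pos hu0 hv0)) (pow_pos hx 2)]

lemma quadratic_in_δ_pos {γ δ x u v s : ℝ} (hγ0 : 0 ≤ γ) (hγ1 : γ ≤ 11 / 12) (hx : 0 < x)
    (hu : 0 < u) (hv : 0 < v)
    (hu2 : u ^ 2 = 1 - x) (hv2 : v ^ 2 = 1 - γ * x) (hs2 : s ^ 2 = x) :
    0 < 1 + 2 * (u - v) ^ 2 / (x ^ 2 * (u * v))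
      + δ * ((u - v) * (1 + 2 * (u * v)) / (2 * (s * (u * v))))
      + δ ^ 2 * ((γ * (1 - x) + (1 - γ * x)) / (2 * (u * v))) := by
  set a := (γ * (1 - x) + (1 - γ * x)) / (2 * (u * v))
  set b := (u - v) * (1 + 2 * (u * v)) / (2 * (s * (u * v)))
  set c := 1 + 2 * (u - v) ^ 2 / (x ^ 2 * (u * v))
  have ha : 0 < a := by
    have : 0 < 1 - γ * x := by rw [← hv2]; positivity
    have : 0 ≤ γ * (1 - x) := by rw [← hu2]; positivity
    positivity
  have hdisc : discrim a b c * (4 * x ^ 3 * (u * v) ^ 2)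
      = x ^ 2 * (u - v) ^ 2 * (1 + 2 * (u * v)) ^ 2
        - 8 * x * (γ * (1 - x) + (1 - γ * x)) * (x ^ 2 * (u * v) + 2 * (u - v) ^ 2) := by
    unfold discrim
    simp only [a, b, c, div_pow, mul_pow, hs2]
    field_simp
    ring
  have hm : x * (γ * (1 - x) + (1 - γ * x)) = u ^ 2 + v ^ 2 - 2 * u ^ 2 * v ^ 2 := by
    linear_combination (1 - 2 * γ * x) * hu2 - (1 - 2 * u ^ 2) * hv2
  have hP := discriminant_numerator_neg hu (by nlinarith) hv (by nlinarith) (by nlinarith)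
  rw [show 1 - u ^ 2 = x by linarith, ← hm] at hP
  have hneg : discrim a b c * (4 * x ^ 3 * (u * v) ^ 2) < 0 := by
    rw [hdisc]
    linarith
  have hpos := quadratic_pos_of_discrim_neg ha (neg_of_mul_neg_left hneg (by positivity)) δ
  linarith

theorem stmt_14 (γ δ : ℝ) (hγ1 : 0 < γ) (hγ2 : γ ≤ 11/12) :
    StrictMonoOn
      (fun x : ℝ =>
        ((2 - x)^2 - 4 * Real.sqrt (1 - x) * Real.sqrt (1 - γ*x)) / x
        + δ * Real.sqrt x * (Real.sqrt (1 - x) - Real.sqrt (1 - γ*x))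
        + δ^2 * (1 - Real.sqrt (1 - x) * Real.sqrt (1 - γ*x)))
      (Set.Ioo (0:ℝ) 1) := by
  have hγx : ∀ x ∈ Ioo (0:ℝ) 1, 0 < 1 - γ * x := fun x hx => by nlinarith [hx.1, hx.2]
  have hderiv := fun x (hx : x ∈ Ioo (0:ℝ) 1) => hasDerivAt_quadratic_in_δ δ hx.1 hx.2 (hγx x hx)
  refine strictMonoOn_of_deriv_pos (convex_Ioo 0 1)
    (fun x hx => (hderiv x hx).continuousAt.continuousWithinAt) fun x hx => ?_
  rw [interior_Ioo] at hx
  rw [(hderiv x hx).deriv]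
  exact quadratic_in_δ_pos hγ1.le hγ2 hx.1 (sqrt_pos.2 (sub_pos.2 hx.2)) (sqrt_pos.2 (hγx x hx))
    (sq_sqrt (sub_pos.2 hx.2).le) (sq_sqrt (hγx x hx).le) (sq_sqrt hx.1.le)
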